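/- Let U ∈ ℝ^{m×r}, U' ∈ ℝ^{m×r'} be semi-orthogonal matrices with the column space of U contained in the column space of U', and let V ∈ ℝ^{n×r}, V' ∈ ℝ^{n×r'} be semi-orthogonal matrices with the column space of V contained in the column space of V'. Then for every G ∈ ℝ^{m×n}: ‖(I_m − U' U'ᵀ) G (I_n − V' V'ᵀ)‖_* ≤ ‖(I_m − U Uᵀ) G (I_n − V Vᵀ)‖_*. -/

import Mathlib

open Matrix

section OldSqrt

open scoped ComplexOrder

noncomputable def Matrix.PosSemidef.sqrt {n : Type*} [Fintype n] [DecidableEq n] {𝕜 : Type*}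
    [RCLike 𝕜] {A : Matrix n n 𝕜} (hA : A.PosSemidef) : Matrix n n 𝕜 :=
  hA.1.eigenvectorUnitary.1 * diagonal ((↑) ∘ (√·) ∘ hA.1.eigenvalues) *
  (star hA.1.eigenvectorUnitary : Matrix n n 𝕜)

end OldSqrt

noncomputable def nuclearNorm {m n : ℕ} (A : Matrix (Fin m) (Fin n) ℝ) : ℝ :=
  (Matrix.PosSemidef.sqrt (Matrix.posSemidef_conjTranspose_mul_self A)).trace

section NuclearAux

variable {m n : ℕ}

private lemma entryTmul {k l : ℕ} (A B : Matrix (Fin k) (Fin l) ℝ) (i j : Fin l) :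
    (Aᵀ * B) i j = ∑ p, A p i * B p j := by
  simp [Matrix.mul_apply]

private lemma psd_diag_nonneg {k : ℕ} {P : Matrix (Fin k) (Fin k) ℝ} (hP : P.PosSemidef)
    (i : Fin k) : 0 ≤ P i i := by
  exact hP.diag_nonneg

/-- nuclear norm as the sum of square roots of the eigenvalues of `Mᴴ M`. -/
private lemma nuclearNorm_eq_sum (M : Matrix (Fin m) (Fin n) ℝ) :
    nuclearNorm M
      = ∑ i, Real.sqrt ((Matrix.posSemidef_conjTranspose_mul_self M).1.eigenvalues i) := by
  set hB := Matrix.posSemidef_conjTranspose_mul_self M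
  unfold nuclearNorm Matrix.PosSemidef.sqrt
  rw [Matrix.trace_mul_cycle]
  rw [show (star (hB.1.eigenvectorUnitary : Matrix (Fin n) (Fin n) ℝ)) *
      (hB.1.eigenvectorUnitary : Matrix (Fin n) (Fin n) ℝ) = 1 from
    (Matrix.mem_unitaryGroup_iff').mp hB.1.eigenvectorUnitary.2, Matrix.one_mul,
    Matrix.trace_diagonal]
  simp

/-- duality upper bound: `trace (Xᵀ M) ≤ ‖M‖₊` for a contraction `X`. -/
private lemma trace_le_nuclear (M X : Matrix (Fin m) (Fin n) ℝ)
    (hX : ((1 : Matrix (Fin n) (Fin n) ℝ) - Xᵀ * X).PosSemidef) :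
    Matrix.trace (Xᵀ * M) ≤ nuclearNorm M := by
  classical
  rw [nuclearNorm_eq_sum]
  set hB := Matrix.posSemidef_conjTranspose_mul_self M with hBdef
  set Q : Matrix (Fin n) (Fin n) ℝ := (hB.1.eigenvectorUnitary : Matrix (Fin n) (Fin n) ℝ) with hQdef
  have hQ1 : Q * Qᵀ = 1 := by
    have := (Matrix.mem_unitaryGroup_iff).mp hB.1.eigenvectorUnitary.2
    simpa [hQdef, Matrix.star_eq_conjTranspose,
      Matrix.conjTranspose_eq_transpose_of_trivial] using this
  have hQ2 : Qᵀ * Q = 1 := by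
    have := (Matrix.mem_unitaryGroup_iff').mp hB.1.eigenvectorUnitary.2
    simpa [hQdef, Matrix.star_eq_conjTranspose,
      Matrix.conjTranspose_eq_transpose_of_trivial] using this
  have hdiag : Qᵀ * (Mᴴ * M) * Q = Matrix.diagonal hB.1.eigenvalues := by
    have := hB.1.conjStarAlgAut_star_eigenvectorUnitary
    simpa [Unitary.conjStarAlgAut_apply, hQdef, Matrix.star_eq_conjTranspose,
      Matrix.conjTranspose_eq_transpose_of_trivial, Function.comp] using this
  have htr : Matrix.trace (Xᵀ * M) = Matrix.trace ((X * Q)ᵀ * (M * Q)) := by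
    conv_rhs => rw [Matrix.transpose_mul, Matrix.mul_assoc, ← Matrix.mul_assoc Xᵀ M Q,
      Matrix.trace_mul_comm, Matrix.mul_assoc (Xᵀ * M) Q Qᵀ, hQ1, Matrix.mul_one]
  rw [htr]
  have htr2 : Matrix.trace ((X * Q)ᵀ * (M * Q)) = ∑ i, ∑ k, (X * Q) k i * (M * Q) k i := by
    rw [Matrix.trace]
    exact Finset.sum_congr rfl fun i _ => by rw [Matrix.diag_apply, entryTmul]
  rw [htr2]
  apply Finset.sum_le_sum
  intro i _
  have ha : ∑ k, (X * Q) k i ^ 2 ≤ 1 := by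
    have h1 : ((X * Q)ᵀ * (X * Q)) i i = ∑ k, (X * Q) k i ^ 2 := by
      rw [entryTmul]; exact Finset.sum_congr rfl fun _ _ => (sq _).symm
    have h2 : (X * Q)ᵀ * (X * Q) = 1 - Qᵀ * (1 - Xᵀ * X) * Q := by
      rw [Matrix.transpose_mul]
      rw [Matrix.mul_sub, Matrix.sub_mul, Matrix.mul_one, hQ2]
      rw [sub_sub_cancel]
      rw [Matrix.mul_assoc, Matrix.mul_assoc, Matrix.mul_assoc]
    have hpsd : (Qᵀ * (1 - Xᵀ * X) * Q).PosSemidef := by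
      have := hX.conjTranspose_mul_mul_same Q
      simpa [Matrix.conjTranspose_eq_transpose_of_trivial] using this
    have hd := psd_diag_nonneg hpsd i
    have h3 : ((1 - Qᵀ * (1 - Xᵀ * X) * Q : Matrix (Fin n) (Fin n) ℝ)) i i ≤ 1 := by
      simp only [Matrix.sub_apply, Matrix.one_apply_eq]
      linarith
    rw [← h1, h2]
    exact h3
  have hb : ∑ k, (M * Q) k i ^ 2 = hB.1.eigenvalues i := by
    have h1 : ((M * Q)ᵀ * (M * Q)) i i = ∑ k, (M * Q) k i ^ 2 := by
      rw [entryTmul]; exact Finset.sum_congr rfl fun _ _ => (sq _).symm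
    have h2 : (M * Q)ᵀ * (M * Q) = Qᵀ * (Mᴴ * M) * Q := by
      rw [Matrix.transpose_mul, Matrix.conjTranspose_eq_transpose_of_trivial]
      rw [Matrix.mul_assoc, Matrix.mul_assoc, Matrix.mul_assoc]
    rw [← h1, h2, hdiag]
    simp
  have hcs : (∑ k, (X * Q) k i * (M * Q) k i) ^ 2
      ≤ (∑ k, (X * Q) k i ^ 2) * ∑ k, (M * Q) k i ^ 2 :=
    Finset.sum_mul_sq_le_sq_mul_sq _ _ _
  have hb_nn : (0:ℝ) ≤ ∑ k, (M * Q) k i ^ 2 := Finset.sum_nonneg fun _ _ => sq_nonneg _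
  calc ∑ k, (X * Q) k i * (M * Q) k i
      ≤ Real.sqrt ((∑ k, (X * Q) k i ^ 2) * ∑ k, (M * Q) k i ^ 2) := by
        refine le_trans (le_abs_self _) ?_
        rw [← Real.sqrt_sq_eq_abs]
        exact Real.sqrt_le_sqrt hcs
    _ ≤ Real.sqrt (1 * ∑ k, (M * Q) k i ^ 2) := by
        apply Real.sqrt_le_sqrt
        exact mul_le_mul_of_nonneg_right ha hb_nn
    _ = Real.sqrt (hB.1.eigenvalues i) := by rw [one_mul, hb]

/-- duality: the nuclear norm is attained as `trace (Xᵀ M)` for some contraction `X`. -/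
private lemma exists_dual (M : Matrix (Fin m) (Fin n) ℝ) :
    ∃ X : Matrix (Fin m) (Fin n) ℝ, ((1 : Matrix (Fin n) (Fin n) ℝ) - Xᵀ * X).PosSemidef ∧
      Matrix.trace (Xᵀ * M) = nuclearNorm M := by
  classical
  rw [nuclearNorm_eq_sum]
  set hB := Matrix.posSemidef_conjTranspose_mul_self M with hBdef
  set μ := hB.1.eigenvalues with hμdef
  set Q : Matrix (Fin n) (Fin n) ℝ := (hB.1.eigenvectorUnitary : Matrix (Fin n) (Fin n) ℝ) with hQdef
  have hQ1 : Q * Qᵀ = 1 := by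
    have := (Matrix.mem_unitaryGroup_iff).mp hB.1.eigenvectorUnitary.2
    simpa [hQdef, Matrix.star_eq_conjTranspose,
      Matrix.conjTranspose_eq_transpose_of_trivial] using this
  have hQ2 : Qᵀ * Q = 1 := by
    have := (Matrix.mem_unitaryGroup_iff').mp hB.1.eigenvectorUnitary.2
    simpa [hQdef, Matrix.star_eq_conjTranspose,
      Matrix.conjTranspose_eq_transpose_of_trivial] using this
  have hspec : Mᴴ * M = Q * Matrix.diagonal μ * Qᵀ := by
    have := hB.1.spectral_theorem
    simpa [Unitary.conjStarAlgAut_apply, hQdef, hμdef, Matrix.star_eq_conjTranspose,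
      Matrix.conjTranspose_eq_transpose_of_trivial, Function.comp] using this
  set g : Fin n → ℝ := fun i => if μ i = 0 then 0 else (Real.sqrt (μ i))⁻¹ with hgdef
  have hμnn : ∀ i, 0 ≤ μ i := fun i => hB.eigenvalues_nonneg i
  set P : Matrix (Fin n) (Fin n) ℝ := Q * Matrix.diagonal g * Qᵀ with hPdef
  have hPT : Pᵀ = P := by
    rw [hPdef, Matrix.transpose_mul, Matrix.transpose_mul, Matrix.transpose_transpose,
      Matrix.diagonal_transpose, Matrix.mul_assoc]
  refine ⟨M * P, ?_, ?_⟩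
  · have hXX : (M * P)ᵀ * (M * P) = Q * Matrix.diagonal (fun i => g i * μ i * g i) * Qᵀ := by
      rw [Matrix.transpose_mul, hPT]
      calc P * Mᵀ * (M * P)
          = P * (Mᴴ * M) * P := by
            simp only [Matrix.conjTranspose_eq_transpose_of_trivial, Matrix.mul_assoc]
        _ = Q * Matrix.diagonal (fun i => g i * μ i * g i) * Qᵀ := by
            rw [hspec, hPdef]
            rw [show Q * Matrix.diagonal g * Qᵀ * (Q * Matrix.diagonal μ * Qᵀ) *
                (Q * Matrix.diagonal g * Qᵀ)
              = Q * (Matrix.diagonal g * (Qᵀ * Q) * Matrix.diagonal μ * (Qᵀ * Q) *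
                  Matrix.diagonal g) * Qᵀ by
              simp only [Matrix.mul_assoc]]
            rw [hQ2, Matrix.mul_one, Matrix.mul_one, Matrix.diagonal_mul_diagonal,
              Matrix.diagonal_mul_diagonal]
    rw [hXX]
    have hd : Matrix.diagonal (fun i => 1 - g i * μ i * g i)
        = 1 - Matrix.diagonal (fun i => g i * μ i * g i) := by
      ext i j
      by_cases h : i = j <;> simp [Matrix.diagonal_apply, Matrix.one_apply, h]
    have key : (1 : Matrix (Fin n) (Fin n) ℝ)
          - Q * Matrix.diagonal (fun i => g i * μ i * g i) * Qᵀ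
        = Q * Matrix.diagonal (fun i => 1 - g i * μ i * g i) * Qᵀ := by
      rw [hd, Matrix.mul_sub, Matrix.mul_one, Matrix.sub_mul, hQ1]
    rw [key]
    have hdpsd : (Matrix.diagonal (fun i => 1 - g i * μ i * g i)).PosSemidef := by
      rw [Matrix.posSemidef_diagonal_iff]
      intro i
      by_cases h : μ i = 0
      · simp [hgdef, h]
      · have hpos : 0 < μ i := lt_of_le_of_ne (hμnn i) (Ne.symm h)
        have : g i * μ i * g i = 1 := by
          rw [hgdef]
          simp only [h, if_false]
          rw [show (Real.sqrt (μ i))⁻¹ * μ i * (Real.sqrt (μ i))⁻¹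
              = μ i / (Real.sqrt (μ i) * Real.sqrt (μ i)) by ring]
          rw [Real.mul_self_sqrt (hμnn i)]
          exact div_self h
        simp [this]
    have := hdpsd.mul_mul_conjTranspose_same Q
    simpa [Matrix.conjTranspose_eq_transpose_of_trivial] using this
  · have hXM : (M * P)ᵀ * M = P * (Mᴴ * M) := by
      rw [Matrix.transpose_mul, hPT, Matrix.conjTranspose_eq_transpose_of_trivial,
        Matrix.mul_assoc]
    rw [hXM, hspec, hPdef]
    rw [show Q * Matrix.diagonal g * Qᵀ * (Q * Matrix.diagonal μ * Qᵀ)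
        = Q * (Matrix.diagonal g * (Qᵀ * Q) * Matrix.diagonal μ) * Qᵀ by
      simp only [Matrix.mul_assoc]]
    rw [hQ2, Matrix.mul_one, Matrix.diagonal_mul_diagonal]
    rw [Matrix.trace_mul_cycle, hQ2, Matrix.one_mul, Matrix.trace_diagonal]
    apply Finset.sum_congr rfl
    intro i _
    by_cases h : μ i = 0
    · simp [hgdef, h]
    · have hpos : 0 < μ i := lt_of_le_of_ne (hμnn i) (Ne.symm h)
      rw [hgdef]
      simp only [h, if_false]
      rw [show (Real.sqrt (μ i))⁻¹ * μ i = μ i / Real.sqrt (μ i) by ring]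
      rw [Real.div_sqrt]

private lemma sym_idem_psd {k : ℕ} (S : Matrix (Fin k) (Fin k) ℝ)
    (hS : Sᵀ = S) (hS2 : S * S = S) : S.PosSemidef := by
  have : S = Sᴴ * S := by
    rw [Matrix.conjTranspose_eq_transpose_of_trivial, hS, hS2]
  rw [this]
  exact Matrix.posSemidef_conjTranspose_mul_self S

private lemma contraction_psd (R : Matrix (Fin m) (Fin m) ℝ) (S : Matrix (Fin n) (Fin n) ℝ)
    (X : Matrix (Fin m) (Fin n) ℝ)
    (hR : Rᵀ = R) (hR2 : R * R = R) (hS : Sᵀ = S) (hS2 : S * S = S)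
    (hX : ((1 : Matrix (Fin n) (Fin n) ℝ) - Xᵀ * X).PosSemidef) :
    ((1 : Matrix (Fin n) (Fin n) ℝ) - (R * X * S)ᵀ * (R * X * S)).PosSemidef := by
  have hRpsd := sym_idem_psd (1 - R) (by rw [Matrix.transpose_sub, Matrix.transpose_one, hR])
    (by rw [Matrix.mul_sub, Matrix.sub_mul, Matrix.sub_mul, Matrix.mul_one, Matrix.one_mul,
      Matrix.mul_one, hR2]; abel)
  have hSpsd := sym_idem_psd (1 - S) (by rw [Matrix.transpose_sub, Matrix.transpose_one, hS])
    (by rw [Matrix.mul_sub, Matrix.sub_mul, Matrix.sub_mul, Matrix.mul_one, Matrix.one_mul,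
      Matrix.mul_one, hS2]; abel)
  have hmid : ((1 : Matrix (Fin n) (Fin n) ℝ) - Xᵀ * (R * X)).PosSemidef := by
    have h1 : (Xᵀ * ((1 - R) * X)).PosSemidef := by
      have := hRpsd.conjTranspose_mul_mul_same X
      simpa [Matrix.conjTranspose_eq_transpose_of_trivial, Matrix.mul_assoc] using this
    have heq : (1 : Matrix (Fin n) (Fin n) ℝ) - Xᵀ * (R * X)
        = (1 - Xᵀ * X) + Xᵀ * ((1 - R) * X) := by
      simp only [Matrix.sub_mul, Matrix.mul_sub, Matrix.one_mul, Matrix.mul_assoc]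
      abel
    rw [heq]
    exact hX.add h1
  have houter : (S * ((1 - Xᵀ * (R * X)) * S)).PosSemidef := by
    have := hmid.conjTranspose_mul_mul_same S
    simpa [Matrix.conjTranspose_eq_transpose_of_trivial, hS, Matrix.mul_assoc] using this
  have e1 : (R * X * S)ᵀ * (R * X * S) = S * (Xᵀ * (R * (X * S))) := by
    rw [Matrix.transpose_mul, Matrix.transpose_mul, hS, hR]
    simp only [Matrix.mul_assoc]
    rw [← Matrix.mul_assoc R R (X * S), hR2]
  have heq : (1 : Matrix (Fin n) (Fin n) ℝ) - (R * X * S)ᵀ * (R * X * S)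
      = (1 - S) + S * ((1 - Xᵀ * (R * X)) * S) := by
    rw [e1]
    simp only [Matrix.sub_mul, Matrix.mul_sub, Matrix.one_mul, Matrix.mul_one, Matrix.mul_assoc]
    rw [hS2]
    abel
  rw [heq]
  exact hSpsd.add houter

/-- the nuclear norm does not increase under multiplication by orthogonal projections. -/
private lemma nuclear_proj_le (R : Matrix (Fin m) (Fin m) ℝ) (S : Matrix (Fin n) (Fin n) ℝ)
    (hR : Rᵀ = R) (hR2 : R * R = R) (hS : Sᵀ = S) (hS2 : S * S = S)
    (A : Matrix (Fin m) (Fin n) ℝ) :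
    nuclearNorm (R * A * S) ≤ nuclearNorm A := by
  obtain ⟨X, hX1, hX2⟩ := exists_dual (R * A * S)
  rw [← hX2]
  have e : Matrix.trace (Xᵀ * (R * A * S)) = Matrix.trace ((R * X * S)ᵀ * A) := by
    rw [Matrix.transpose_mul, Matrix.transpose_mul, hS, hR]
    conv_rhs => rw [Matrix.trace_mul_comm]
    simp only [Matrix.mul_assoc]
    conv_lhs => rw [← Matrix.mul_assoc Xᵀ R (A * S), Matrix.trace_mul_comm]
    simp only [Matrix.mul_assoc]
  rw [e]
  exact trace_le_nuclear A (R * X * S) (contraction_psd R S X hR hR2 hS hS2 hX1)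

private lemma range_absorb {k r r' : ℕ} (U : Matrix (Fin k) (Fin r) ℝ)
    (U' : Matrix (Fin k) (Fin r') ℝ) (hU' : U'ᵀ * U' = 1)
    (h : LinearMap.range U.mulVecLin ≤ LinearMap.range U'.mulVecLin) :
    U' * U'ᵀ * U = U := by
  have hv : ∀ v : Fin r → ℝ, (U' * U'ᵀ) *ᵥ (U *ᵥ v) = U *ᵥ v := by
    intro v
    obtain ⟨w, hw⟩ := h (LinearMap.mem_range_self U.mulVecLin v)
    rw [Matrix.mulVecLin_apply, Matrix.mulVecLin_apply] at hw
    rw [← hw, Matrix.mulVec_mulVec,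
      show U' * U'ᵀ * U' = U' by rw [Matrix.mul_assoc, hU', Matrix.mul_one]]
  ext i j
  have h2 := congrFun (hv (Pi.single j 1)) i
  rw [Matrix.mulVec_mulVec, Matrix.mul_assoc] at h2
  simpa [Matrix.mulVec_single, ← Matrix.mul_assoc] using h2

private lemma proj_sym {k r : ℕ} (U : Matrix (Fin k) (Fin r) ℝ) : (U * Uᵀ)ᵀ = U * Uᵀ := by
  rw [Matrix.transpose_mul, Matrix.transpose_transpose]

end NuclearAux

theorem residual_monotone_in_subspace
    {m n r r' : ℕ}
    (U : Matrix (Fin m) (Fin r) ℝ) (U' : Matrix (Fin m) (Fin r') ℝ)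
    (V : Matrix (Fin n) (Fin r) ℝ) (V' : Matrix (Fin n) (Fin r') ℝ)
    (hU : Uᵀ * U = 1) (hU' : U'ᵀ * U' = 1)
    (hV : Vᵀ * V = 1) (hV' : V'ᵀ * V' = 1)
    (hUrange : LinearMap.range U.mulVecLin ≤ LinearMap.range U'.mulVecLin)
    (hVrange : LinearMap.range V.mulVecLin ≤ LinearMap.range V'.mulVecLin)
    (G : Matrix (Fin m) (Fin n) ℝ) :
    nuclearNorm ((1 - U' * U'ᵀ) * G * (1 - V' * V'ᵀ))
      ≤ nuclearNorm ((1 - U * Uᵀ) * G * (1 - V * Vᵀ)) := by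
  have hP'P : U' * U'ᵀ * (U * Uᵀ) = U * Uᵀ := by
    rw [← Matrix.mul_assoc, range_absorb U U' hU' hUrange]
  have hQ'Q : V' * V'ᵀ * (V * Vᵀ) = V * Vᵀ := by
    rw [← Matrix.mul_assoc, range_absorb V V' hV' hVrange]
  have hQQ' : (V * Vᵀ) * (V' * V'ᵀ) = V * Vᵀ := by
    calc (V * Vᵀ) * (V' * V'ᵀ) = ((V' * V'ᵀ) * (V * Vᵀ))ᵀ := by
          rw [Matrix.transpose_mul, proj_sym, proj_sym]
      _ = (V * Vᵀ)ᵀ := by rw [hQ'Q]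
      _ = V * Vᵀ := proj_sym V
  have hleft : (1 - U' * U'ᵀ) * (1 - U * Uᵀ) = 1 - U' * U'ᵀ := by
    rw [Matrix.mul_sub, Matrix.mul_one, Matrix.sub_mul, Matrix.one_mul, hP'P]
    abel
  have hright : (1 - V * Vᵀ) * (1 - V' * V'ᵀ) = 1 - V' * V'ᵀ := by
    rw [Matrix.sub_mul, Matrix.one_mul, Matrix.mul_sub, Matrix.mul_one, hQQ']
    abel
  have key : (1 - U' * U'ᵀ) * G * (1 - V' * V'ᵀ)
      = (1 - U' * U'ᵀ) * ((1 - U * Uᵀ) * G * (1 - V * Vᵀ)) * (1 - V' * V'ᵀ) := by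
    calc (1 - U' * U'ᵀ) * G * (1 - V' * V'ᵀ)
        = ((1 - U' * U'ᵀ) * (1 - U * Uᵀ)) * G * ((1 - V * Vᵀ) * (1 - V' * V'ᵀ)) := by
          rw [hleft, hright]
      _ = (1 - U' * U'ᵀ) * ((1 - U * Uᵀ) * G * (1 - V * Vᵀ)) * (1 - V' * V'ᵀ) := by
          simp only [Matrix.mul_assoc]
  rw [key]
  apply nuclear_proj_le
  · rw [Matrix.transpose_sub, Matrix.transpose_one, proj_sym]
  · rw [Matrix.mul_sub, Matrix.mul_one, Matrix.sub_mul, Matrix.one_mul,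
      show (U' * U'ᵀ) * (U' * U'ᵀ) = U' * U'ᵀ by
        rw [Matrix.mul_assoc, ← Matrix.mul_assoc U'ᵀ U' U'ᵀ, hU', Matrix.one_mul]]
    abel
  · rw [Matrix.transpose_sub, Matrix.transpose_one, proj_sym]
  · rw [Matrix.mul_sub, Matrix.mul_one, Matrix.sub_mul, Matrix.one_mul,
      show (V' * V'ᵀ) * (V' * V'ᵀ) = V' * V'ᵀ by
        rw [Matrix.mul_assoc, ← Matrix.mul_assoc V'ᵀ V' V'ᵀ, hV', Matrix.one_mul]]
    abel
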